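/- Let k be a field, V a k-vector space, and T a linear transformation of V. Then T is triangularizable if and only if V is the internal direct sum, over a ∈ k, of the generalized eigenspaces ⋃_{i=1}^∞ ker((T − aI)^i) (where I denotes the identity transformation); that is, these subspaces are independent and their sum is all of V. -/

import Mathlib

universe u v

open Polynomial

/-- A linear transformation `T` is *triangularizable* if `V` has a basis `b` indexed by a
well-ordered set (with strict order `r`) such that `T (b i)` lies in the span of
`{b j : j ≤ i}` for every index `i`. -/
def Triangularizable {k : Type u} {V : Type v} [Field k] [AddCommGroup V] [Module k V]
    (T : Module.End k V) : Prop :=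
  ∃ (ι : Type v) (r : ι → ι → Prop) (b : Module.Basis ι k V),
    IsWellOrder ι r ∧ ∀ i, T (b i) ∈ Submodule.span k (⇑b '' {j | r j i ∨ j = i})

/-!
If `T` is triangular with respect to a well-ordered basis, transfinite induction puts every basis
vector in the sum `W` of the generalized eigenspaces: `(T - c) bᵢ` lies in the span of earlier
basis vectors, and `(T - c) v ∈ W` forces `v ∈ W`, because on a generalized eigenspace for
`a ≠ c` the map `T - c` is a nilpotent map plus the unit `a - c`, hence surjective.
Conversely, generalized eigenspaces are always independent, and if they span `V`, a basis of
each one adapted to its filtration by the kernels of `(T - a)ⁿ`, ordered first by the least such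
`n`, triangularizes `T`.
-/

open Module End Submodule Set

section

variable {k : Type u} {V : Type v} [Field k] [AddCommGroup V] [Module k V]

lemma iSup_ker_pow_succ_eq_maxGenEigenspace (T : End k V) (a : k) :
    ⨆ i : ℕ, LinearMap.ker ((T - a • 1) ^ (i + 1)) = T.maxGenEigenspace a := by
  simp_rw [← iSup_genEigenspace_eq, genEigenspace_nat]
  exact (T - a • 1).iterateKer.monotone.iSup_nat_add 1

lemma surjOn_sub_smul_genEigenspace (T : End k V) {a c : k} (hac : a ≠ c) (n : ℕ) :
    SurjOn (T - a • (1 : End k V)) (T.genEigenspace c n) (T.genEigenspace c n) := by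
  have hmaps (b : k) :
      MapsTo (T - b • (1 : End k V)) (T.genEigenspace c n) (T.genEigenspace c n) :=
    mapsTo_genEigenspace_of_comm (Algebra.mul_sub_algebraMap_commutes T b) c n
  have hsplit : (T - a • 1).restrict (hmaps a) =
      (T - c • 1).restrict (hmaps c) + algebraMap k (End k _) (c - a) := by
    ext x
    change (T - a • (1 : End k V)) x = (T - c • (1 : End k V)) x + (c - a) • (x : V)
    simp only [LinearMap.sub_apply, LinearMap.smul_apply, one_apply]
    module
  have hunit : IsUnit ((T - a • 1).restrict (hmaps a)) := by
    rw [hsplit]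
    exact (isNilpotent_restrict_genEigenspace_nat T c n).isUnit_add_right_of_commute
      ((sub_ne_zero.mpr hac.symm).isUnit.map _) (Algebra.commutes _ _).symm
  intro x hx
  obtain ⟨w, hw⟩ := ((isUnit_iff _).mp hunit).surjective ⟨x, hx⟩
  exact ⟨w, w.2, congrArg Subtype.val hw⟩

lemma surjOn_sub_smul_maxGenEigenspace (T : End k V) {a c : k} (hac : a ≠ c) :
    SurjOn (T - a • (1 : End k V)) (T.maxGenEigenspace c) (T.maxGenEigenspace c) := by
  intro x hx
  obtain ⟨n, hn⟩ := (mem_maxGenEigenspace T c x).mp hx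
  obtain ⟨w, hw, rfl⟩ := surjOn_sub_smul_genEigenspace T hac n (mem_genEigenspace_nat.mpr hn)
  exact ⟨w, genEigenspace_le_maximal T c n hw, rfl⟩

lemma mem_maxGenEigenspace_of_sub_smul_apply_mem (T : End k V) {a : k} {v : V}
    (hv : (T - a • 1) v ∈ T.maxGenEigenspace a) : v ∈ T.maxGenEigenspace a := by
  obtain ⟨n, hn⟩ := (mem_maxGenEigenspace T a _).mp hv
  exact (mem_maxGenEigenspace T a v).mpr ⟨n + 1, by rwa [pow_succ, mul_apply]⟩

lemma mem_iSup_maxGenEigenspace_of_sub_smul_apply_mem (T : End k V) {a : k} {v : V}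
    (hv : (T - a • 1) v ∈ ⨆ c, T.maxGenEigenspace c) : v ∈ ⨆ c, T.maxGenEigenspace c := by
  set W := ⨆ c, T.maxGenEigenspace c
  have hW : W ≤ W.map (T - a • 1) ⊔ T.maxGenEigenspace a := iSup_le fun c => by
    rcases eq_or_ne a c with rfl | hac
    · exact le_sup_right
    · intro x hx
      obtain ⟨w, hw, rfl⟩ := surjOn_sub_smul_maxGenEigenspace T hac hx
      exact mem_sup_left (mem_map_of_mem (mem_iSup_of_mem c hw))
  obtain ⟨-, ⟨w, hw, rfl⟩, y, hy, hwy⟩ := mem_sup.mp (hW hv)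
  have hvw : v - w ∈ T.maxGenEigenspace a :=
    mem_maxGenEigenspace_of_sub_smul_apply_mem T (by rwa [map_sub, ← hwy, add_sub_cancel_left])
  simpa using add_mem (mem_iSup_of_mem a hvw) hw

lemma Triangularizable.iSup_maxGenEigenspace_eq_top {T : End k V} (hT : Triangularizable T) :
    ⨆ a, T.maxGenEigenspace a = ⊤ := by
  obtain ⟨ι, r, b, hr, htri⟩ := hT
  have hb (i : ι) : b i ∈ ⨆ a, T.maxGenEigenspace a := by
    induction i using IsWellFounded.induction r with
    | _ i ih =>
    have hprev : span k (b '' {j | r j i}) ≤ ⨆ a, T.maxGenEigenspace a :=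
      span_le.mpr (by rintro - ⟨j, hj, rfl⟩; exact ih j hj)
    have hTb := htri i
    rw [ofPred_or, image_union, span_union, ofPred_eq_eq_singleton, image_singleton,
      mem_sup] at hTb
    obtain ⟨u, hu, z, hz, hTb⟩ := hTb
    obtain ⟨c, rfl⟩ := mem_span_singleton.mp hz
    refine mem_iSup_maxGenEigenspace_of_sub_smul_apply_mem T (a := c) (hprev ?_)
    simpa [← hTb] using hu
  rw [eq_top_iff, ← b.span_eq, span_le]
  rintro - ⟨i, rfl⟩
  exact hb i

lemma exists_linearIndepOn_span_inter_eq {K : ℕ → Submodule k V} (hK : Monotone K) :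
    ∃ S : Set V, LinearIndepOn k id S ∧ S ⊆ ⋃ n, (K n : Set V) ∧
      ∀ n, span k (S ∩ K n) = K n := by
  have hext (n : ℕ) (s : Set V) : ∃ t, LinearIndepOn k id s → s ⊆ K n →
      s ⊆ t ∧ t ⊆ K n ∧ (K n : Set V) ⊆ span k t ∧ LinearIndepOn k id t := by
    by_cases hs : LinearIndepOn k id s ∧ s ⊆ K n
    · obtain ⟨t, htK, hst, hspan, hind⟩ := exists_linearIndepOn_id_extension hs.1 hs.2
      exact ⟨t, fun _ _ => ⟨hst, htK, hspan, hind⟩⟩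
    · exact ⟨s, fun h₁ h₂ => absurd ⟨h₁, h₂⟩ hs⟩
  choose ext hext using hext
  let B (n : ℕ) : Set V := Nat.rec (ext 0 ∅) (fun n s => ext (n + 1) s) n
  have hB (n : ℕ) : LinearIndepOn k id (B n) ∧ B n ⊆ K n ∧ (K n : Set V) ⊆ span k (B n) := by
    induction n with
    | zero =>
      obtain ⟨-, hBK, hspan, hind⟩ := hext 0 ∅ (linearIndepOn_empty k id) (empty_subset _)
      exact ⟨hind, hBK, hspan⟩
    | succ n ih =>
      obtain ⟨-, hBK, hspan, hind⟩ := hext (n + 1) (B n) ih.1 (ih.2.1.trans (hK n.le_succ))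
      exact ⟨hind, hBK, hspan⟩
  have hBmono : Monotone B := monotone_nat_of_le_succ fun n =>
    (hext (n + 1) (B n) (hB n).1 ((hB n).2.1.trans (hK n.le_succ))).1
  refine ⟨⋃ n, B n, linearIndepOn_iUnion_of_directed hBmono.directed_le fun n => (hB n).1,
    iUnion_mono fun n => (hB n).2.1, fun n => le_antisymm (span_le.mpr inter_subset_right) ?_⟩
  exact (hB n).2.2.trans (span_mono (subset_inter (subset_iUnion B n) (hB n).2.1))

lemma Triangularizable.of_basis {T : End k V} {ι : Type*} (b : Basis ι k V)
    (r : ι → ι → Prop) [IsWellOrder ι r]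
    (hT : ∀ i, T (b i) ∈ span k (b '' {j | r j i ∨ j = i})) : Triangularizable T := by
  -- reindex by `range b`, which lives in the universe of `V`
  let e : ι ≃ range b := Equiv.ofInjective b b.injective
  refine ⟨range b, e.symm ⁻¹'o r, b.reindex e, RelIso.IsWellOrder.preimage r e.symm, fun i => ?_⟩
  convert hT (e.symm i) using 3
  · rw [Basis.coe_reindex, image_comp, e.symm.image_eq_preimage_symm]
    congr 1
    ext j
    simp [← Equiv.eq_symm_apply]
  · exact b.reindex_apply e i

lemma Triangularizable.of_basis_of_level {T : End k V} {ι : Type*} (b : Basis ι k V) (lvl : ι → ℕ)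
    (hT : ∀ i, ∃ c : k, (T - c • 1) (b i) ∈ span k (b '' {j | lvl j < lvl i})) :
    Triangularizable T := by
  let r : ι → ι → Prop := (fun i => (lvl i, i)) ⁻¹'o Prod.Lex (· < ·) WellOrderingRel
  have : IsWellOrder ι r :=
    (RelEmbedding.mk ⟨fun i => (lvl i, i), fun _ _ h => congrArg Prod.snd h⟩ Iff.rfl :
      r ↪r Prod.Lex (· < ·) WellOrderingRel).isWellOrder
  refine of_basis b r fun i => ?_
  obtain ⟨c, hc⟩ := hT i
  have hlower : span k (b '' {j | lvl j < lvl i}) ≤ span k (b '' {j | r j i ∨ j = i}) :=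
    span_mono (image_mono fun j hj => Or.inl (Prod.Lex.left _ _ hj))
  have hself : b i ∈ span k (b '' {j | r j i ∨ j = i}) := subset_span ⟨i, Or.inr rfl, rfl⟩
  rw [show T (b i) = (T - c • 1) (b i) + c • b i by simp]
  exact add_mem (hlower hc) (smul_mem _ c hself)

lemma Triangularizable.of_iSup_maxGenEigenspace_eq_top {T : End k V}
    (hT : ⨆ a, T.maxGenEigenspace a = ⊤) : Triangularizable T := by
  classical
  let K (a : k) (n : ℕ) : Submodule k V := LinearMap.ker ((T - a • 1) ^ n)
  choose S hind hSK hspan using fun a => exists_linearIndepOn_span_inter_eq (K := K a)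
    (T - a • 1).iterateKer.monotone
  have hspanS (a : k) : span k (range ((↑) : S a → V)) = T.maxGenEigenspace a := by
    calc span k (range ((↑) : S a → V)) = span k (⋃ n, S a ∩ K a n) := by
          rw [Subtype.range_coe, ← inter_iUnion, inter_eq_left.mpr (hSK a)]
      _ = T.maxGenEigenspace a := by
          simp_rw [span_iUnion, hspan, ← iSup_genEigenspace_eq, genEigenspace_nat, K]
  let B (a : k) : Basis (S a) k (T.maxGenEigenspace a) :=
    (Basis.span (hind a)).map (LinearEquiv.ofEq _ _ (hspanS a))
  let b := (DirectSum.isInternal_submodule_of_iSupIndep_of_iSup_eq_top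
    T.independent_maxGenEigenspace hT).collectedBasis B
  have hb (p : Σ a, S a) : b p = p.2 := by
    simp only [b, B, DirectSum.IsInternal.collectedBasis_coe, Basis.map_apply,
      LinearEquiv.coe_ofEq_apply]
    exact congrArg Subtype.val (Basis.span_apply (hind p.1) p.2)
  have hlvl (p : Σ a, S a) : ∃ n, (p.2 : V) ∈ K p.1 n := mem_iUnion.mp (hSK p.1 p.2.2)
  refine of_basis_of_level b (fun p => Nat.find (hlvl p)) fun ⟨a, x⟩ => ⟨a, ?_⟩
  rw [hb]
  have hx := Nat.find_spec (hlvl ⟨a, x⟩)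
  rcases hn : Nat.find (hlvl ⟨a, x⟩) with _ | m <;> rw [hn] at hx
  · have hx0 : (x : V) = 0 := by simpa [K] using hx
    simp [hx0]
  · have hNx : (T - a • 1) x ∈ K a m := by
      rwa [LinearMap.mem_ker, ← mul_apply, ← pow_succ]
    rw [← hspan a m] at hNx
    refine span_mono ?_ hNx
    rintro y ⟨hyS, hyK⟩
    exact ⟨⟨a, y, hyS⟩, Nat.lt_succ_of_le (Nat.find_min' _ hyK), hb _⟩

end

/-- `T` is triangularizable iff `V` is the internal direct sum, over `a ∈ k`, of the
generalized eigenspaces `⋃_{i≥1} ker((T - aI)^i)`. -/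
theorem triangularizable_iff_isInternal_generalizedEigenspaces
    {k : Type u} {V : Type v} [Field k] [AddCommGroup V] [Module k V]
    (T : Module.End k V) :
    Triangularizable T ↔
      (iSupIndep fun a : k =>
        ⨆ i : ℕ, LinearMap.ker ((T - a • (1 : Module.End k V)) ^ (i + 1))) ∧
      (⨆ a : k, ⨆ i : ℕ, LinearMap.ker ((T - a • (1 : Module.End k V)) ^ (i + 1))) = ⊤ := by
  simp_rw [iSup_ker_pow_succ_eq_maxGenEigenspace]
  exact ⟨fun hT => ⟨T.independent_maxGenEigenspace, hT.iSup_maxGenEigenspace_eq_top⟩,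
    fun h => .of_iSup_maxGenEigenspace_eq_top h.2⟩
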